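/- arXiv:0705.2859 — 5 statements merged into one kernel-verified Lean document; each statement's English description precedes it below -/
import Mathlib

section
/- Let A be a category in which, for every pair of objects a and b, the automorphism group Aut(b) acts by post-composition on the morphism set Hom_A(a,b), and this action is free and transitive whenever Hom_A(a,b) is nonempty. Then for every morphism f : a → b there exists a unique group homomorphism Aut(f) : Aut(a) → Aut(b) such that f ∘ u = Aut(f)(u) ∘ f for every automorphism u ∈ Aut(a). -/
/-!
Freeness of the action of `Aut b` on `f ≫ -` makes `v ↦ f ≫ v.hom` injective, so each
automorphism `u` of `a` has at most one `v` with `u.hom ≫ f = f ≫ v.hom`, and transitivity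
provides one. Uniqueness of these `v` forces `u ↦ v` to be multiplicative, and it is also what
makes the resulting homomorphism unique.
-/

open CategoryTheory

namespace CategoryTheory

variable {A : Type*} [Category A] {a b : A} (f : a ⟶ b)

theorem Aut.eq_of_comp_hom_eq_comp_hom (hfree : ∀ v : Aut b, f ≫ v.hom = f → v = 1)
    {v w : Aut b} (h : f ≫ v.hom = f ≫ w.hom) : v = w := by
  have hfix : f ≫ (w⁻¹ * v).hom = f :=
    calc f ≫ (w⁻¹ * v).hom = (f ≫ v.hom) ≫ w.inv := (Category.assoc _ _ _).symm
      _ = f := by rw [h, Category.assoc, Iso.hom_inv_id (X := b) (Y := b) w, Category.comp_id]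
  exact (inv_mul_eq_one.mp (hfree _ hfix)).symm

theorem Aut.existsUnique_monoidHom_comp_eq_of_free
    (hfree : ∀ v : Aut b, f ≫ v.hom = f → v = 1)
    (hex : ∀ u : Aut a, ∃ v : Aut b, u.hom ≫ f = f ≫ v.hom) :
    ∃! φ : Aut a →* Aut b, ∀ u : Aut a, u.hom ≫ f = f ≫ (φ u).hom := by
  choose g hg using hex
  have hmul : ∀ u v : Aut a, g (u * v) = g u * g v := fun u v =>
    Aut.eq_of_comp_hom_eq_comp_hom f hfree <|
      calc f ≫ (g (u * v)).hom = (v.hom ≫ u.hom) ≫ f := (hg (u * v)).symm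
        _ = (f ≫ (g v).hom) ≫ (g u).hom := by
          rw [Category.assoc, hg u, ← Category.assoc, hg v]
        _ = f ≫ (g u * g v).hom := Category.assoc _ _ _
  refine ⟨MonoidHom.mk' g hmul, hg, fun ψ hψ => ?_⟩
  ext1 u
  exact Aut.eq_of_comp_hom_eq_comp_hom f hfree ((hψ u).symm.trans (hg u))

end CategoryTheory

/-- In a category where, for every pair of objects `a`, `b`, the group `Aut b` acts
by post-composition on `Hom(a,b)` freely and transitively whenever `Hom(a,b)` is nonempty,
every morphism `f : a ⟶ b` determines a unique group homomorphism
`Aut f : Aut a →* Aut b` with `f ∘ u = (Aut f) u ∘ f` for all `u ∈ Aut a`. -/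
theorem chart_category_aut_hom {A : Type*} [Category A]
    (htrans : ∀ (a b : A) (f g : a ⟶ b), ∃ v : Aut b, f ≫ v.hom = g)
    (hfree : ∀ (a b : A) (f : a ⟶ b) (v : Aut b), f ≫ v.hom = f → v = 1)
    {a b : A} (f : a ⟶ b) :
    ∃! φ : Aut a →* Aut b, ∀ u : Aut a, u.hom ≫ f = f ≫ (φ u).hom :=
  Aut.existsUnique_monoidHom_comp_eq_of_free f (hfree a b f) fun u =>
    (htrans a b f (u.hom ≫ f)).imp fun _ hv => hv.symm
end

section
/- Let φ₁ : H₁ → H and φ₂ : H₂ → H be group homomorphisms, let V₁, V₂, V be sets equipped with actions of H₁, H₂, H respectively, and let f₁ : V₁ → V and f₂ : V₂ → V be equivariant maps, i.e. f_i(h · v) = φ_i(h) · f_i(v) for all h ∈ H_i and v ∈ V_i. Assume f₂ has the following property: for all y, y′ ∈ V₂ and h ∈ H with h · f₂(y) = f₂(y′), there exists v ∈ H₂ with φ₂(v) = h and y′ = v · y. Let V₁₂ = {(x, y) ∈ V₁ × V₂ : f₁(x) = f₂(y)} and let H₁₂ = {(u, v) ∈ H₁ × H₂ : φ₁(u) =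 φ₂(v)} act on V₁₂ componentwise. Then for all h₁, h₂ ∈ H₁ and all (x₁, y₁), (x₂, y₂) ∈ V₁₂ with h₁ · x₁ = h₂ · x₂, there exists (u, v) ∈ H₁₂ such that h₁ = h₂ u, x₂ = u · x₁, and y₂ = v · y₁. In particular, the natural map from the balanced product H₁ ×^{H₁₂} V₁₂ to V₁ sending the class of (h, (x, y)) to h · x is injective. -/
/-- Lemma on fiber products of orbifold charts: given equivariant maps
`f₁ : V₁ → V` (along `φ₁ : H₁ →* H`) and `f₂ : V₂ → V` (along `φ₂ : H₂ →* H`) such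
that `f₂` lifts isomorphisms (if `h • f₂ y = f₂ y'` then `y' = v • y` for some `v`
with `φ₂ v = h`), set `V₁₂ = V₁ ×_V V₂` and `H₁₂ = H₁ ×_H H₂` acting componentwise.
Then whenever `h₁ • x₁ = h₂ • x₂` for `(x₁,y₁), (x₂,y₂) ∈ V₁₂`, there is
`(u,v) ∈ H₁₂` with `h₁ = h₂ u`, `x₂ = u • x₁`, `y₂ = v • y₁`; consequently
the natural map `H₁ ×^{H₁₂} V₁₂ → V₁`, `[(h,(x,y))] ↦ h • x`, is injective. -/
theorem fiber_product_chart_injective {H₁ H₂ H V₁ V₂ V : Type*}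
    [Group H₁] [Group H₂] [Group H]
    [MulAction H₁ V₁] [MulAction H₂ V₂] [MulAction H V]
    (φ₁ : H₁ →* H) (φ₂ : H₂ →* H) (f₁ : V₁ → V) (f₂ : V₂ → V)
    (hf₁ : ∀ (h : H₁) (v : V₁), f₁ (h • v) = φ₁ h • f₁ v)
    (hf₂ : ∀ (h : H₂) (v : V₂), f₂ (h • v) = φ₂ h • f₂ v)
    (hlift : ∀ (y y' : V₂) (h : H), h • f₂ y = f₂ y' →
      ∃ v : H₂, φ₂ v = h ∧ y' = v • y) :
    (∀ (h₁ h₂ : H₁) (x₁ x₂ : V₁) (y₁ y₂ : V₂),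
      f₁ x₁ = f₂ y₁ → f₁ x₂ = f₂ y₂ → h₁ • x₁ = h₂ • x₂ →
      ∃ (u : H₁) (v : H₂), φ₁ u = φ₂ v ∧ h₁ = h₂ * u ∧ x₂ = u • x₁ ∧ y₂ = v • y₁) ∧
    ∃ F : Quot (fun p p' : H₁ × {z : V₁ × V₂ // f₁ z.1 = f₂ z.2} =>
            ∃ (u : H₁) (v : H₂), φ₁ u = φ₂ v ∧ p.1 = p'.1 * u ∧
              (p'.2 : V₁ × V₂).1 = u • (p.2 : V₁ × V₂).1 ∧
              (p'.2 : V₁ × V₂).2 = v • (p.2 : V₁ × V₂).2) → V₁,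
      (∀ p, F (Quot.mk _ p) = p.1 • (p.2 : V₁ × V₂).1) ∧ Function.Injective F := by
  have key : ∀ (h₁ h₂ : H₁) (x₁ x₂ : V₁) (y₁ y₂ : V₂),
      f₁ x₁ = f₂ y₁ → f₁ x₂ = f₂ y₂ → h₁ • x₁ = h₂ • x₂ →
      ∃ (u : H₁) (v : H₂), φ₁ u = φ₂ v ∧ h₁ = h₂ * u ∧ x₂ = u • x₁ ∧ y₂ = v • y₁ := by
    intro h₁ h₂ x₁ x₂ y₁ y₂ e₁ e₂ hx
    refine ⟨h₂⁻¹ * h₁, ?_⟩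
    have hx₂ : x₂ = (h₂⁻¹ * h₁) • x₁ := by
      rw [mul_smul, hx, ← mul_smul, inv_mul_cancel, one_smul]
    have : φ₁ (h₂⁻¹ * h₁) • f₂ y₁ = f₂ y₂ := by
      rw [← e₁, ← hf₁, ← hx₂, e₂]
    obtain ⟨v, hv1, hv2⟩ := hlift y₁ y₂ _ this
    exact ⟨v, hv1.symm, by group, hx₂, hv2⟩
  refine ⟨key, ?_⟩
  refine ⟨Quot.lift (fun p => p.1 • (p.2 : V₁ × V₂).1) ?_, fun p => rfl, ?_⟩
  · rintro p p' ⟨u, v, -, h1, h2, -⟩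
    simp only [h1, h2, mul_smul]
  · intro a b
    induction a using Quot.ind with | _ p =>
    induction b using Quot.ind with | _ q =>
    intro h
    exact Quot.sound (key p.1 q.1 _ _ _ _ p.2.2 q.2.2 h)
end

section
/- Let X be a set, A a category, and Im : Ob(A) → 𝒫(X) an assignment of a subset of X to every object such that Hom_A(a, b) ≠ ∅ implies Im(a) ⊆ Im(b). Assume: (i) the sets Im(a), a ∈ Ob(A), cover X; and (ii) for all objects a′, a″ and every x ∈ Im(a′) ∩ Im(a″) there exists an object a together with morphisms a → a′ and a → a″ such that x ∈ Im(a). For a finite subset I of Ob(A), let A_I be the full subcategory of A on the objects a with Hom_A(a, i) ≠ ∅ for every i ∈ I, and let X_I = ⋂_{i ∈ I} Im(i). Then A_I satisfies (i) and (ii) relative to X_I: the sets Im(a) for a ∈ Ob(A_I) cover X_I, and for all a′, a″ ∈ Ob(A_I) and every x ∈ Im(a′) ∩ Im(a″) there exists a ∈ Ob(A_I) with morphisms a → a′ and a → a″ in A and x ∈ Im(a). -/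
open CategoryTheory

/-- Abstract orbifold atlas lemma: let `Im : Ob(A) → 𝒫(X)` assign to each chart its
image, monotone along morphisms, satisfying the covering axiom (i) and the
compatibility axiom (ii).  For a finite set `I` of objects, let `A_I` consist of the
objects admitting a morphism to every element of `I`, and `X_I = ⋂_{i ∈ I} Im(i)`.
Then `A_I` satisfies (i) and (ii) relative to `X_I`. -/
theorem induced_atlas_axioms {A X : Type*} [Category A] (Im : A → Set X)
    (hmono : ∀ a b : A, Nonempty (a ⟶ b) → Im a ⊆ Im b)
    (hcover : ∀ x : X, ∃ a : A, x ∈ Im a)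
    (hcompat : ∀ (a' a'' : A) (x : X), x ∈ Im a' → x ∈ Im a'' →
      ∃ a : A, Nonempty (a ⟶ a') ∧ Nonempty (a ⟶ a'') ∧ x ∈ Im a)
    (I : Finset A) :
    (∀ x : X, (∀ i ∈ I, x ∈ Im i) →
      ∃ a : A, (∀ i ∈ I, Nonempty (a ⟶ i)) ∧ x ∈ Im a) ∧
    (∀ a' a'' : A, (∀ i ∈ I, Nonempty (a' ⟶ i)) → (∀ i ∈ I, Nonempty (a'' ⟶ i)) →
      ∀ x : X, x ∈ Im a' → x ∈ Im a'' →
      ∃ a : A, (∀ i ∈ I, Nonempty (a ⟶ i)) ∧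
        Nonempty (a ⟶ a') ∧ Nonempty (a ⟶ a'') ∧ x ∈ Im a) := by
  classical
  constructor
  · induction I using Finset.induction with
    | empty =>
      intro x _
      obtain ⟨a, ha⟩ := hcover x
      exact ⟨a, by simp, ha⟩
    | @insert i I hi ih =>
      intro x hx
      obtain ⟨a, haI, hax⟩ := ih x (fun j hj => hx j (Finset.mem_insert_of_mem hj))
      obtain ⟨b, ⟨f⟩, hbi, hbx⟩ := hcompat a i x hax (hx i (Finset.mem_insert_self i I))
      refine ⟨b, ?_, hbx⟩
      intro j hj
      rcases Finset.mem_insert.mp hj with h | h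
      · exact h ▸ hbi
      · obtain ⟨g⟩ := haI j h
        exact ⟨f ≫ g⟩
  · intro a' a'' ha' _ x hx' hx''
    obtain ⟨a, ⟨f⟩, hf'', hax⟩ := hcompat a' a'' x hx' hx''
    refine ⟨a, fun i hi => ?_, ⟨f⟩, hf'', hax⟩
    obtain ⟨g⟩ := ha' i hi
    exact ⟨f ≫ g⟩
end

section
/- Let f : X → Y and g : Z → Y be continuous maps of topological spaces, let T = Z ×_Y X = {(z, x) ∈ Z × X : g(z) = f(x)} with the subspace topology of the product, and let f′ : T → Z be the first projection (the base change of f along g). If g is a surjective local homeomorphism and f′ is a proper map, then f is a proper map. -/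
/-!
A surjective local homeomorphism `g` is open, hence a quotient map. For closed `C ⊆ X`,
`g⁻¹(f C) = f'(T ∩ (Z × C))` is closed because `f'` is proper, so `f C` is closed. The fibre
of `f` over `g z` is the image of the compact fibre of `f'` over `z` under the second projection.
-/

open Function.Pullback Topology

section

variable {X Y Z : Type*} {f : X → Y} {g : Z → Y}

lemma Function.Pullback.preimage_image_eq_image_fst_preimage_snd (C : Set X) :
    g ⁻¹' (f '' C) = fst '' (snd ⁻¹' C : Set (g.Pullback f)) := by
  ext z
  constructor
  · rintro ⟨x, hxC, hx⟩
    exact ⟨⟨(z, x), hx.symm⟩, hxC, rfl⟩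
  · rintro ⟨⟨⟨z, x⟩, h⟩, hxC, rfl⟩
    exact ⟨x, hxC, h.symm⟩

lemma Function.Pullback.preimage_singleton_eq_image_snd_fiber (z : Z) :
    f ⁻¹' {g z} = snd '' (fst ⁻¹' {z} : Set (g.Pullback f)) := by
  ext x
  constructor
  · intro hx
    exact ⟨⟨(z, x), hx.symm⟩, rfl, rfl⟩
  · rintro ⟨⟨⟨z, x⟩, h⟩, rfl, rfl⟩
    exact h.symm

variable [TopologicalSpace X] [TopologicalSpace Z]

lemma Function.Pullback.continuous_snd : Continuous (snd : g.Pullback f → X) :=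
  _root_.continuous_snd.comp continuous_subtype_val

variable [TopologicalSpace Y]

theorem IsProperMap.of_isProperMap_pullback_fst (hf : Continuous f) (hg : IsQuotientMap g)
    (hf' : IsProperMap (fst : g.Pullback f → Z)) : IsProperMap f := by
  rw [isProperMap_iff_isClosedMap_and_compact_fibers]
  refine ⟨hf, fun C hC ↦ ?_, fun y ↦ ?_⟩
  · rw [← hg.isClosed_preimage, preimage_image_eq_image_fst_preimage_snd]
    exact hf'.isClosedMap _ (hC.preimage Function.Pullback.continuous_snd)
  · obtain ⟨z, rfl⟩ := hg.surjective y
    rw [preimage_singleton_eq_image_snd_fiber]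
    exact (hf'.isCompact_preimage isCompact_singleton).image Function.Pullback.continuous_snd

end

/-- Properness is local on the base: if the base change `f'` of a continuous map
`f : X → Y` along a surjective local homeomorphism `g : Z → Y` is a proper map,
then so is `f`. -/
theorem isProperMap_of_base_change {X Y Z : Type*}
    [TopologicalSpace X] [TopologicalSpace Y] [TopologicalSpace Z]
    (f : X → Y) (g : Z → Y) (hf : Continuous f) (hg : IsLocalHomeomorph g)
    (hgs : Function.Surjective g)
    (hf' : IsProperMap
      (fun p : {p : Z × X // g p.1 = f p.2} => (p : Z × X).1)) :
    IsProperMap f :=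
  .of_isProperMap_pullback_fst hf (hg.isOpenMap.isQuotientMap hg.continuous hgs) hf'
end

section
/- Let f : X → Y and g : Z → Y be continuous maps of topological spaces, let T = Z ×_Y X = {(z, x) ∈ Z × X : g(z) = f(x)} with the subspace topology of the product, and let f′ : T → Z be the first projection (the base change of f along g). If g is a surjective local homeomorphism and f′ is an open embedding, then f is an open embedding. -/
/-- Open embeddings are local on the base: if the base change `f'` of a continuous
map `f : X → Y` along a surjective local homeomorphism `g : Z → Y` is an open
embedding, then so is `f`. -/
theorem isOpenEmbedding_of_base_change {X Y Z : Type*}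
    [TopologicalSpace X] [TopologicalSpace Y] [TopologicalSpace Z]
    (f : X → Y) (g : Z → Y) (hf : Continuous f) (hg : IsLocalHomeomorph g)
    (hgs : Function.Surjective g)
    (hf' : Topology.IsOpenEmbedding
      (fun p : {p : Z × X // g p.1 = f p.2} => (p : Z × X).1)) :
    Topology.IsOpenEmbedding f := by
  have hginj : Function.Injective f := by
    intro x1 x2 h
    obtain ⟨z, hz⟩ := hgs (f x1)
    have h2 : g z = f x2 := by rw [hz, h]
    have := hf'.injective (a₁ := ⟨(z, x1), hz⟩) (a₂ := ⟨(z, x2), h2⟩) rfl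
    exact (Prod.ext_iff.mp (congrArg Subtype.val this)).2
  have hopen : IsOpenMap f := by
    intro U hU
    have hcont2 : Continuous (fun p : {p : Z × X // g p.1 = f p.2} => (p : Z × X).2) :=
      continuous_snd.comp continuous_subtype_val
    set W := (fun p : {p : Z × X // g p.1 = f p.2} => (p : Z × X).1) ''
      ((fun p : {p : Z × X // g p.1 = f p.2} => (p : Z × X).2) ⁻¹' U) with hW
    have hWopen : IsOpen W := hf'.isOpenMap _ (hU.preimage hcont2)
    have himg : f '' U = g '' W := by
      ext y
      constructor
      · rintro ⟨x, hx, rfl⟩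
        obtain ⟨z, hz⟩ := hgs (f x)
        exact ⟨z, ⟨⟨(z, x), hz⟩, hx, rfl⟩, hz⟩
      · rintro ⟨z, ⟨⟨⟨z', x⟩, hzx⟩, hx, rfl⟩, rfl⟩
        exact ⟨x, hx, hzx.symm⟩
    rw [himg]
    exact hg.isOpenMap _ hWopen
  exact Topology.IsOpenEmbedding.of_continuous_injective_isOpenMap hf hginj hopen
end
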